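/- arXiv:1711.08699 — 3 statements merged into one kernel-verified Lean document; each statement's English description precedes it below -/
import Mathlib

section
/- In an ordered symmetric monoidal category, a lax product structure, if it exists, is unique: if {(Δ_X, ⊥_X)} and {(Δ'_X, ⊥'_X)} are both lax product structures on C, then Δ_X = Δ'_X and ⊥_X = ⊥'_X for every object X. -/
open CategoryTheory MonoidalCategory

universe v u

/-- An ordered symmetric monoidal category: each hom-set carries a partial order (supplied
as an instance) making composition and tensoring of morphisms monotone. -/
class OrderedSMC (C : Type u) [Category.{v} C] [MonoidalCategory C]
    [SymmetricCategory C] [∀ X Y : C, PartialOrder (X ⟶ Y)] : Prop where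
  comp_mono : ∀ {X Y Z : C} {f f' : X ⟶ Y} {g g' : Y ⟶ Z},
    f ≤ f' → g ≤ g' → f ≫ g ≤ f' ≫ g'
  tensor_mono : ∀ {X X' Y Y' : C} {f f' : X ⟶ X'} {g g' : Y ⟶ Y'},
    f ≤ f' → g ≤ g' → (f ⊗ₘ g) ≤ (f' ⊗ₘ g')

/-- A lax product structure on an ordered symmetric monoidal category: a choice of
cocommutative comonoid `(Δ_X, ⊥_X)` on each object, compatible with the monoidal product,
such that every morphism is a lax comonoid homomorphism. -/
structure LaxProductStructure (C : Type u) [Category.{v} C] [MonoidalCategory C]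
    [SymmetricCategory C] [∀ X Y : C, PartialOrder (X ⟶ Y)] where
  /-- comultiplication Δ -/
  dup : ∀ X : C, X ⟶ X ⊗ X
  /-- counit ⊥ -/
  bot : ∀ X : C, X ⟶ 𝟙_ C
  dup_coassoc : ∀ X : C, dup X ≫ (dup X ▷ X) ≫ (α_ X X X).hom = dup X ≫ (X ◁ dup X)
  dup_bot_left : ∀ X : C, dup X ≫ (bot X ▷ X) = (λ_ X).inv
  dup_bot_right : ∀ X : C, dup X ≫ (X ◁ bot X) = (ρ_ X).inv
  dup_cocomm : ∀ X : C, dup X ≫ (β_ X X).hom = dup X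
  dup_tensor : ∀ X Y : C, dup (X ⊗ Y) = (dup X ⊗ₘ dup Y) ≫ tensorμ X X Y Y
  bot_tensor : ∀ X Y : C, bot (X ⊗ Y) = (bot X ⊗ₘ bot Y) ≫ (λ_ (𝟙_ C)).hom
  lax_dup : ∀ {X Y : C} (f : X ⟶ Y), f ≫ dup Y ≤ dup X ≫ (f ⊗ₘ f)
  lax_bot : ∀ {X Y : C} (f : X ⟶ Y), f ≫ bot Y ≤ bot X

/-!
The counit `⊥_I` of the unit object is idempotent (laxity along the unitor `I ≅ I ⊗ I`) and has
a section (the counit law), so it is the identity; laxity of `⊥'` along `⊥_X` then gives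
`⊥_X ≤ ⊥'_X`. Once the counits agree, the projections `X ⊗ Y ⟶ X`, `X ⊗ Y ⟶ Y` they define
split both `Δ'_{X ⊗ X}` and `Δ_X ⊗ Δ_X`, so laxity of `Δ'` along `Δ_X`, followed by these
projections, gives `Δ_X ≤ Δ'_X`.
-/

theorem leftUnitor_inv_comp_tensorHom_comp_leftUnitor_hom {C : Type u} [Category.{v} C]
    [MonoidalCategory C] (f g : 𝟙_ C ⟶ 𝟙_ C) :
    (λ_ (𝟙_ C)).inv ≫ (f ⊗ₘ g) ≫ (λ_ (𝟙_ C)).hom = f ≫ g := by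
  rw [MonoidalCategory.tensorHom_def, unitors_inv_equal, Category.assoc,
    ← rightUnitor_inv_naturality_assoc, ← unitors_inv_equal, ← leftUnitor_inv_naturality_assoc]
  simp

namespace LaxProductStructure

variable {C : Type u} [Category.{v} C] [MonoidalCategory C] [SymmetricCategory C]
  [∀ X Y : C, PartialOrder (X ⟶ Y)] (L : LaxProductStructure C)

def fst (X Y : C) : X ⊗ Y ⟶ X := X ◁ L.bot Y ≫ (ρ_ X).hom

def snd (X Y : C) : X ⊗ Y ⟶ Y := L.bot X ▷ Y ≫ (λ_ Y).hom

@[simp]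
theorem dup_fst (X : C) : L.dup X ≫ L.fst X X = 𝟙 X := by
  simp [fst, reassoc_of% L.dup_bot_right X]

@[simp]
theorem dup_snd (X : C) : L.dup X ≫ L.snd X X = 𝟙 X := by
  simp [snd, reassoc_of% L.dup_bot_left X]

theorem dup_tensor_comp_fst_tensorHom_snd (X Y : C) :
    L.dup (X ⊗ Y) ≫ (L.fst X Y ⊗ₘ L.snd X Y) = 𝟙 (X ⊗ Y) := by
  have hβ : (β_ (𝟙_ C) (𝟙_ C)).hom = (λ_ (𝟙_ C)).hom ≫ (ρ_ (𝟙_ C)).inv := by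
    rw [← braiding_rightUnitor (𝟙_ C)]; simp
  have hnat := tensorμ_natural (𝟙 X) (L.bot X) (L.bot Y) (𝟙 Y)
  simp only [id_tensorHom, tensorHom_id] at hnat
  calc L.dup (X ⊗ Y) ≫ (L.fst X Y ⊗ₘ L.snd X Y)
      = (L.dup X ⊗ₘ L.dup Y) ≫ tensorμ X X Y Y ≫ (X ◁ L.bot Y ⊗ₘ L.bot X ▷ Y) ≫
          ((ρ_ X).hom ⊗ₘ (λ_ Y).hom) := by
        rw [L.dup_tensor, fst, snd, tensorHom_comp_tensorHom, Category.assoc]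
    _ = ((L.dup X ≫ X ◁ L.bot X) ⊗ₘ (L.dup Y ≫ L.bot Y ▷ Y)) ≫ tensorμ X (𝟙_ C) (𝟙_ C) Y ≫
          ((ρ_ X).hom ⊗ₘ (λ_ Y).hom) := by
        rw [← reassoc_of% hnat, tensorHom_comp_tensorHom_assoc]
    _ = 𝟙 (X ⊗ Y) := by
        rw [L.dup_bot_right, L.dup_bot_left]
        simp only [tensorμ, hβ]
        monoidal

variable [OrderedSMC C]

theorem bot_unit_comp_self : L.bot (𝟙_ C) ≫ L.bot (𝟙_ C) = L.bot (𝟙_ C) := by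
  apply le_antisymm (L.lax_bot _)
  have h := OrderedSMC.comp_mono (le_refl (λ_ (𝟙_ C)).inv) (L.lax_bot (λ_ (𝟙_ C)).hom)
  rwa [L.bot_tensor, leftUnitor_inv_comp_tensorHom_comp_leftUnitor_hom, Iso.inv_hom_id_assoc] at h

theorem bot_unit : L.bot (𝟙_ C) = 𝟙 (𝟙_ C) := by
  set ε := L.bot (𝟙_ C)
  have hsection : (L.dup (𝟙_ C) ≫ (λ_ (𝟙_ C)).hom) ≫ ε = 𝟙 (𝟙_ C) := by
    rw [Category.assoc, ← leftUnitor_naturality, unitors_equal]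
    exact L.dup_fst (𝟙_ C)
  calc ε = ((L.dup (𝟙_ C) ≫ (λ_ (𝟙_ C)).hom) ≫ ε) ≫ ε := by rw [hsection, Category.id_comp]
    _ = 𝟙 (𝟙_ C) := by rw [Category.assoc, L.bot_unit_comp_self, hsection]

theorem bot_le (L' : LaxProductStructure C) (X : C) : L.bot X ≤ L'.bot X := by
  simpa [L'.bot_unit] using L'.lax_bot (L.bot X)

theorem dup_le_of_bot_eq (L' : LaxProductStructure C) (h : ∀ X, L.bot X = L'.bot X) (X : C) :
    L.dup X ≤ L'.dup X := by
  have hproj : L'.fst X X ⊗ₘ L'.snd X X = L.fst X X ⊗ₘ L.snd X X := by simp [fst, snd, h]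
  calc L.dup X = (L.dup X ≫ L'.dup (X ⊗ X)) ≫ (L'.fst X X ⊗ₘ L'.snd X X) := by
        rw [Category.assoc, dup_tensor_comp_fst_tensorHom_snd, Category.comp_id]
    _ ≤ (L'.dup X ≫ (L.dup X ⊗ₘ L.dup X)) ≫ (L'.fst X X ⊗ₘ L'.snd X X) :=
        OrderedSMC.comp_mono (L'.lax_dup _) le_rfl
    _ = L'.dup X := by simp [hproj, tensorHom_comp_tensorHom]

end LaxProductStructure

/-- A lax product structure on an ordered symmetric monoidal category, if it exists,
is unique. -/
theorem laxProductStructure_unique {C : Type u} [Category.{v} C] [MonoidalCategory C]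
    [SymmetricCategory C] [∀ X Y : C, PartialOrder (X ⟶ Y)] [OrderedSMC C]
    (L L' : LaxProductStructure C) :
    (∀ X : C, L.dup X = L'.dup X) ∧ (∀ X : C, L.bot X = L'.bot X) := by
  have hbot : ∀ X : C, L.bot X = L'.bot X := fun X => (L.bot_le L' X).antisymm (L'.bot_le L X)
  exact ⟨fun X => (L.dup_le_of_bot_eq L' hbot X).antisymm
    (L'.dup_le_of_bot_eq L (fun Y => (hbot Y).symm) X), hbot⟩
end

section
/- In a cartesian bicategory of relations, a morphism R : X ⟶ Y is a map (single-valued and total) if and only if it has a right adjoint, i.e. there exists S : Y ⟶ X with id_X ≤ R ; S and S ; R ≤ id_Y; moreover, in that case the right adjoint is R†, i.e. S = R†. -/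
open CategoryTheory MonoidalCategory

universe v u

/-- A cartesian bicategory of relations: a poset-enriched symmetric monoidal category
in which every object carries a cocommutative comonoid `(dup, del)` and a commutative
monoid `(mrg, bng)`, compatible with the monoidal structure, satisfying the adjunction
inequalities and the Frobenius law, and such that every morphism is a lax comonoid
homomorphism. -/
class CartesianBicatRel (C : Type u) [Category.{v} C] [MonoidalCategory C]
    [SymmetricCategory C] [∀ X Y : C, PartialOrder (X ⟶ Y)] where
  comp_mono : ∀ {X Y Z : C} {f f' : X ⟶ Y} {g g' : Y ⟶ Z},
    f ≤ f' → g ≤ g' → f ≫ g ≤ f' ≫ g'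
  tensor_mono : ∀ {X X' Y Y' : C} {f f' : X ⟶ X'} {g g' : Y ⟶ Y'},
    f ≤ f' → g ≤ g' → (f ⊗ₘ g) ≤ (f' ⊗ₘ g')
  /-- comultiplication Δ -/
  dup : ∀ X : C, X ⟶ X ⊗ X
  /-- counit ! -/
  del : ∀ X : C, X ⟶ 𝟙_ C
  /-- multiplication ∇ -/
  mrg : ∀ X : C, X ⊗ X ⟶ X
  /-- unit ? -/
  bng : ∀ X : C, 𝟙_ C ⟶ X
  dup_coassoc : ∀ X : C, dup X ≫ (dup X ▷ X) ≫ (α_ X X X).hom = dup X ≫ (X ◁ dup X)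
  dup_del_left : ∀ X : C, dup X ≫ (del X ▷ X) = (λ_ X).inv
  dup_del_right : ∀ X : C, dup X ≫ (X ◁ del X) = (ρ_ X).inv
  dup_cocomm : ∀ X : C, dup X ≫ (β_ X X).hom = dup X
  mrg_assoc : ∀ X : C, (mrg X ▷ X) ≫ mrg X = (α_ X X X).hom ≫ (X ◁ mrg X) ≫ mrg X
  mrg_bng_left : ∀ X : C, (bng X ▷ X) ≫ mrg X = (λ_ X).hom
  mrg_bng_right : ∀ X : C, (X ◁ bng X) ≫ mrg X = (ρ_ X).hom
  mrg_comm : ∀ X : C, (β_ X X).hom ≫ mrg X = mrg X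
  dup_tensor : ∀ X Y : C, dup (X ⊗ Y) = (dup X ⊗ₘ dup Y) ≫ tensorμ X X Y Y
  del_tensor : ∀ X Y : C, del (X ⊗ Y) = (del X ⊗ₘ del Y) ≫ (λ_ (𝟙_ C)).hom
  dup_unitObj : dup (𝟙_ C) = (λ_ (𝟙_ C)).inv
  del_unitObj : del (𝟙_ C) = 𝟙 (𝟙_ C)
  mrg_tensor : ∀ X Y : C, mrg (X ⊗ Y) = tensorμ X Y X Y ≫ (mrg X ⊗ₘ mrg Y)
  bng_tensor : ∀ X Y : C, bng (X ⊗ Y) = (λ_ (𝟙_ C)).inv ≫ (bng X ⊗ₘ bng Y)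
  mrg_unitObj : mrg (𝟙_ C) = (λ_ (𝟙_ C)).hom
  bng_unitObj : bng (𝟙_ C) = 𝟙 (𝟙_ C)
  adj_dup_unit : ∀ X : C, 𝟙 X ≤ dup X ≫ mrg X
  adj_dup_counit : ∀ X : C, mrg X ≫ dup X ≤ 𝟙 (X ⊗ X)
  adj_del_counit : ∀ X : C, bng X ≫ del X ≤ 𝟙 (𝟙_ C)
  adj_del_unit : ∀ X : C, 𝟙 X ≤ del X ≫ bng X
  frob_left : ∀ X : C, (dup X ▷ X) ≫ (α_ X X X).hom ≫ (X ◁ mrg X) = mrg X ≫ dup X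
  frob_right : ∀ X : C, (X ◁ dup X) ≫ (α_ X X X).inv ≫ (mrg X ▷ X) = mrg X ≫ dup X
  lax_dup : ∀ {X Y : C} (R : X ⟶ Y), R ≫ dup Y ≤ dup X ≫ (R ⊗ₘ R)
  lax_del : ∀ {X Y : C} (R : X ⟶ Y), R ≫ del Y ≤ del X

namespace CartesianBicatRel

variable {C : Type u} [Category.{v} C] [MonoidalCategory C] [SymmetricCategory C]
  [∀ X Y : C, PartialOrder (X ⟶ Y)] [CartesianBicatRel C]

/-- The dagger `R† : Y ⟶ X` of `R : X ⟶ Y`, built from the cup `η_X = ?;Δ` and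
the cap `ε_Y = ∇;!`. -/
def dagger {X Y : C} (R : X ⟶ Y) : Y ⟶ X :=
  (λ_ Y).inv ≫ ((bng X ≫ dup X) ▷ Y) ≫ (α_ X X Y).hom ≫
    (X ◁ (R ▷ Y)) ≫ (X ◁ (mrg Y ≫ del Y)) ≫ (ρ_ X).hom

/-- `R` is single-valued. -/
def SingleValued {X Y : C} (R : X ⟶ Y) : Prop := dup X ≫ (R ⊗ₘ R) ≤ R ≫ dup Y

/-- `R` is total. -/
def Total {X Y : C} (R : X ⟶ Y) : Prop := del X ≤ R ≫ del Y

/-- `R` is injective. -/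
def Injective {X Y : C} (R : X ⟶ Y) : Prop := (R ⊗ₘ R) ≫ mrg Y ≤ mrg X ≫ R

/-- `R` is surjective. -/
def Surjective {X Y : C} (R : X ⟶ Y) : Prop := bng Y ≤ bng X ≫ R

/-- A map is a single-valued and total morphism. -/
def IsMap {X Y : C} (R : X ⟶ Y) : Prop := SingleValued R ∧ Total R

/-- A comap is an injective and surjective morphism. -/
def IsComap {X Y : C} (R : X ⟶ Y) : Prop := Injective R ∧ Surjective R

end CartesianBicatRel

open CartesianBicatRel in

/-!
If `S` is right adjoint to `R`, the lax comonoid inequalities of `S`, sandwiched between the unit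
`𝟙 ≤ R ≫ S` and the counit `S ≫ R ≤ 𝟙`, make `R` single-valued and total.

Conversely, the Frobenius law gives the snake identity for the cup `?;Δ` and the cap `∇;!`, so the
dagger of `𝟙 X` is `𝟙 X`. The adjunctions `Δ ⊣ ∇` and `! ⊣ ?` make every morphism colax for the
monoid `(∇, ?)`; combined with totality this raises the cap, giving `𝟙 ≤ R ≫ R†`, and combined
with single-valuedness it lowers the cup, giving `R† ≫ R ≤ 𝟙`. Right adjoints in a poset-enriched
category are unique, so any right adjoint of `R` is `R†`.
-/

namespace CartesianBicatRel

variable {C : Type u} [Category.{v} C] [MonoidalCategory C] [SymmetricCategory C]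
  [∀ X Y : C, PartialOrder (X ⟶ Y)] [CartesianBicatRel C]

attribute [gcongr] comp_mono tensor_mono

@[gcongr]
lemma whiskerLeft_mono {X Y Z : C} {f g : Y ⟶ Z} (h : f ≤ g) : X ◁ f ≤ X ◁ g := by
  simpa only [id_tensorHom] using tensor_mono (le_refl (𝟙 X)) h

@[gcongr]
lemma whiskerRight_mono {X Y Z : C} {f g : X ⟶ Y} (h : f ≤ g) : f ▷ Z ≤ g ▷ Z := by
  simpa only [tensorHom_id] using tensor_mono h (le_refl (𝟙 Z))

/-- `R ⊣ S` in the locally ordered sense. -/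
def Adjoint {X Y : C} (R : X ⟶ Y) (S : Y ⟶ X) : Prop := 𝟙 X ≤ R ≫ S ∧ S ≫ R ≤ 𝟙 Y

namespace Adjoint

variable {X Y : C} {R : X ⟶ Y} {S : Y ⟶ X}

lemma unique {S' : Y ⟶ X} (h : Adjoint R S) (h' : Adjoint R S') : S = S' := by
  apply le_antisymm
  · calc S = S ≫ 𝟙 X := (Category.comp_id S).symm
      _ ≤ S ≫ R ≫ S' := by gcongr; exact h'.1
      _ = (S ≫ R) ≫ S' := (Category.assoc _ _ _).symm
      _ ≤ 𝟙 Y ≫ S' := by gcongr; exact h.2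
      _ = S' := Category.id_comp S'
  · calc S' = S' ≫ 𝟙 X := (Category.comp_id S').symm
      _ ≤ S' ≫ R ≫ S := by gcongr; exact h.1
      _ = (S' ≫ R) ≫ S := (Category.assoc _ _ _).symm
      _ ≤ 𝟙 Y ≫ S := by gcongr; exact h'.2
      _ = S := Category.id_comp S

lemma singleValued (h : Adjoint R S) : SingleValued R :=
  calc dup X ≫ (R ⊗ₘ R) = 𝟙 X ≫ dup X ≫ (R ⊗ₘ R) := (Category.id_comp _).symm
    _ ≤ (R ≫ S) ≫ dup X ≫ (R ⊗ₘ R) := by gcongr; exact h.1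
    _ = R ≫ (S ≫ dup X) ≫ (R ⊗ₘ R) := by simp only [Category.assoc]
    _ ≤ R ≫ (dup Y ≫ (S ⊗ₘ S)) ≫ (R ⊗ₘ R) := by gcongr; exact lax_dup S
    _ = R ≫ dup Y ≫ ((S ≫ R) ⊗ₘ (S ≫ R)) := by simp only [Category.assoc, tensorHom_comp_tensorHom]
    _ ≤ R ≫ dup Y ≫ (𝟙 Y ⊗ₘ 𝟙 Y) := by gcongr <;> exact h.2
    _ = R ≫ dup Y := by simp

lemma total (h : Adjoint R S) : Total R :=
  calc del X = 𝟙 X ≫ del X := (Category.id_comp _).symm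
    _ ≤ (R ≫ S) ≫ del X := by gcongr; exact h.1
    _ = R ≫ S ≫ del X := Category.assoc _ _ _
    _ ≤ R ≫ del Y := by gcongr; exact lax_del S

lemma isMap (h : Adjoint R S) : IsMap R := ⟨h.singleValued, h.total⟩

end Adjoint

lemma dagger_id (X : C) : dagger (𝟙 X) = 𝟙 X := by
  simp only [dagger, id_whiskerRight, MonoidalCategory.whiskerLeft_id, Category.id_comp,
    comp_whiskerRight, MonoidalCategory.whiskerLeft_comp, Category.assoc]
  rw [reassoc_of% frob_left (C := C) X, reassoc_of% mrg_bng_left (C := C) X,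
    reassoc_of% dup_del_right (C := C) X]
  simp

lemma mrg_comp_le {X Y : C} (R : X ⟶ Y) : mrg X ≫ R ≤ (R ⊗ₘ R) ≫ mrg Y :=
  calc mrg X ≫ R = mrg X ≫ R ≫ 𝟙 Y := by simp
    _ ≤ mrg X ≫ R ≫ dup Y ≫ mrg Y := by gcongr; exact adj_dup_unit Y
    _ = mrg X ≫ (R ≫ dup Y) ≫ mrg Y := by simp
    _ ≤ mrg X ≫ (dup X ≫ (R ⊗ₘ R)) ≫ mrg Y := by gcongr; exact lax_dup R
    _ = (mrg X ≫ dup X) ≫ (R ⊗ₘ R) ≫ mrg Y := by simp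
    _ ≤ 𝟙 (X ⊗ X) ≫ (R ⊗ₘ R) ≫ mrg Y := by gcongr; exact adj_dup_counit X
    _ = (R ⊗ₘ R) ≫ mrg Y := Category.id_comp _

lemma bng_comp_le {X Y : C} (R : X ⟶ Y) : bng X ≫ R ≤ bng Y :=
  calc bng X ≫ R = bng X ≫ R ≫ 𝟙 Y := by simp
    _ ≤ bng X ≫ R ≫ del Y ≫ bng Y := by gcongr; exact adj_del_unit Y
    _ = bng X ≫ (R ≫ del Y) ≫ bng Y := by simp
    _ ≤ bng X ≫ del X ≫ bng Y := by gcongr; exact lax_del R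
    _ = (bng X ≫ del X) ≫ bng Y := by simp
    _ ≤ 𝟙 (𝟙_ C) ≫ bng Y := by gcongr; exact adj_del_counit X
    _ = bng Y := Category.id_comp _

lemma comp_dagger {X Y : C} (R : X ⟶ Y) :
    R ≫ dagger R = (λ_ X).inv ≫ ((bng X ≫ dup X) ▷ X) ≫ (α_ X X X).hom ≫
      (X ◁ ((R ⊗ₘ R) ≫ mrg Y ≫ del Y)) ≫ (ρ_ X).hom := by
  rw [dagger, ← Category.assoc, leftUnitor_inv_naturality]
  simp only [Category.assoc]
  rw [whisker_exchange_assoc, associator_naturality_right_assoc,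
    ← MonoidalCategory.whiskerLeft_comp_assoc, ← tensorHom_def']
  simp only [MonoidalCategory.whiskerLeft_comp, Category.assoc]

lemma dagger_comp {X Y : C} (R : X ⟶ Y) :
    dagger R ≫ R = (λ_ Y).inv ≫ ((bng X ≫ dup X ≫ (R ⊗ₘ R)) ▷ Y) ≫ (α_ Y Y Y).hom ≫
      (Y ◁ (mrg Y ≫ del Y)) ≫ (ρ_ Y).hom := by
  rw [dagger]
  simp only [Category.assoc]
  rw [← rightUnitor_naturality, whisker_exchange_assoc, whisker_exchange_assoc,
    ← associator_naturality_left_assoc, ← associator_naturality_middle_assoc]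
  simp only [MonoidalCategory.tensorHom_def, comp_whiskerRight, Category.assoc]

lemma Total.le_comp_dagger {X Y : C} {R : X ⟶ Y} (hR : Total R) : 𝟙 X ≤ R ≫ dagger R := by
  have hcap : mrg X ≫ del X ≤ (R ⊗ₘ R) ≫ mrg Y ≫ del Y :=
    calc mrg X ≫ del X ≤ (mrg X ≫ R) ≫ del Y := by rw [Category.assoc]; gcongr; exact hR
      _ ≤ ((R ⊗ₘ R) ≫ mrg Y) ≫ del Y := by gcongr; exact mrg_comp_le R
      _ = (R ⊗ₘ R) ≫ mrg Y ≫ del Y := Category.assoc _ _ _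
  rw [comp_dagger, ← dagger_id X, dagger]
  simp only [MonoidalCategory.whiskerLeft_id, Category.id_comp, id_whiskerRight]
  gcongr

lemma SingleValued.dagger_comp_le {X Y : C} {R : X ⟶ Y} (hR : SingleValued R) :
    dagger R ≫ R ≤ 𝟙 Y := by
  have hcup : bng X ≫ dup X ≫ (R ⊗ₘ R) ≤ bng Y ≫ dup Y :=
    calc bng X ≫ dup X ≫ (R ⊗ₘ R) ≤ bng X ≫ R ≫ dup Y := by gcongr; exact hR
      _ = (bng X ≫ R) ≫ dup Y := (Category.assoc _ _ _).symm
      _ ≤ bng Y ≫ dup Y := by gcongr; exact bng_comp_le R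
  rw [dagger_comp, ← dagger_id Y, dagger]
  simp only [MonoidalCategory.whiskerLeft_id, Category.id_comp, id_whiskerRight]
  gcongr

lemma IsMap.adjoint_dagger {X Y : C} {R : X ⟶ Y} (hR : IsMap R) : Adjoint R (dagger R) :=
  ⟨hR.2.le_comp_dagger, hR.1.dagger_comp_le⟩

end CartesianBicatRel

open CartesianBicatRel in
/-- `R` is a map iff it has a right adjoint, in which case the right adjoint is `R†`. -/
theorem map_iff_right_adjoint {C : Type u} [Category.{v} C] [MonoidalCategory C]
    [SymmetricCategory C] [∀ X Y : C, PartialOrder (X ⟶ Y)] [CartesianBicatRel C]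
    {X Y : C} (R : X ⟶ Y) :
    (IsMap R ↔ ∃ S : Y ⟶ X, 𝟙 X ≤ R ≫ S ∧ S ≫ R ≤ 𝟙 Y) ∧
    (∀ S : Y ⟶ X, 𝟙 X ≤ R ≫ S → S ≫ R ≤ 𝟙 Y → S = dagger R) :=
  ⟨⟨fun hR => ⟨dagger R, hR.adjoint_dagger⟩, fun ⟨_, hS⟩ => Adjoint.isMap hS⟩,
    fun S hunit hcounit =>
      have hS : Adjoint R S := ⟨hunit, hcounit⟩
      hS.unique hS.isMap.adjoint_dagger⟩
end

section
/- In a cartesian bicategory of relations, the maps form a cartesian category: identities are maps, composites of maps are maps, and for objects M, N with projections π₁ : M⊗N ⟶ M given by (id_M ⊗ !_N) followed by the right unitor and π₂ : M⊗N ⟶ N given by (!_M ⊗ id_N) followed by the left unitor, the following holds: for all maps f : K ⟶ M and g : K ⟶ N, the pairing h := Δ_K ; (f ⊗ g) is a map with h ; π₁ = f and h ; π₂ = g, and h is the unique map with these two properties. Hence M⊗N, with π₁ and π₂, is a categorical product of M and N in the subcategory Map(C) of maps. -/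
open CategoryTheory MonoidalCategory

universe v u

/-!
Every isomorphism `f` is a map, by the lax comonoid inequalities of `f⁻¹`; maps are closed under
composition and `⊗`, and `!` and `Δ` are maps (for `Δ` this is where cocommutativity enters).
Hence the projections and the pairings `Δ;(f ⊗ g)` are maps, and the counit laws give
`Δ;(f ⊗ g);π₁ = f` as soon as `g` is total. For uniqueness, the counit laws also give
`Δ_{M⊗N};(π₁ ⊗ π₂) = id`, and a single-valued `h` commutes with copying, so
`h = h;Δ;(π₁ ⊗ π₂) = Δ;(h;π₁ ⊗ h;π₂)`.
-/

namespace CartesianBicatRel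

variable {C : Type u} [Category.{v} C] [MonoidalCategory C] [SymmetricCategory C]
  [∀ X Y : C, PartialOrder (X ⟶ Y)] [CartesianBicatRel C]

theorem Total.comp_del {X Y : C} {R : X ⟶ Y} (hR : Total R) : R ≫ del Y = del X :=
  le_antisymm (lax_del R) hR

theorem SingleValued.comp_dup {X Y : C} {R : X ⟶ Y} (hR : SingleValued R) :
    R ≫ dup Y = dup X ≫ (R ⊗ₘ R) :=
  le_antisymm (lax_dup R) hR

theorem dup_comp_del_tensor_del (X : C) :
    dup X ≫ (del X ⊗ₘ del X) = del X ≫ (λ_ (𝟙_ C)).inv := by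
  rw [MonoidalCategory.tensorHom_def, reassoc_of% dup_del_left, leftUnitor_inv_naturality]

theorem dup_coassoc_inv (X : C) :
    dup X ≫ X ◁ dup X ≫ (α_ X X X).inv = dup X ≫ dup X ▷ X := by
  rw [← reassoc_of% dup_coassoc]; simp

theorem dup_comp_dup_tensor_dup (X : C) :
    dup X ≫ (dup X ⊗ₘ dup X) =
      dup X ≫ X ◁ dup X ≫ X ◁ X ◁ dup X ≫ (α_ X X (X ⊗ X)).inv := by
  rw [MonoidalCategory.tensorHom_def, ← reassoc_of% dup_coassoc_inv,
    associator_inv_naturality_right]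

theorem dup_comp_whiskerLeft_dup_comp_braiding (X : C) :
    dup X ≫ X ◁ dup X ≫ (α_ X X X).inv ≫ (β_ X X).hom ▷ X ≫ (α_ X X X).hom =
      dup X ≫ X ◁ dup X := by
  rw [reassoc_of% dup_coassoc_inv, ← comp_whiskerRight_assoc, dup_cocomm, dup_coassoc]

theorem dup_comp_dup_tensor_dup_comp_tensorμ (X : C) :
    dup X ≫ (dup X ⊗ₘ dup X) ≫ tensorμ X X X X = dup X ≫ (dup X ⊗ₘ dup X) := by
  rw [reassoc_of% dup_comp_dup_tensor_dup, dup_comp_dup_tensor_dup]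
  calc _ = dup X ≫ X ◁ (dup X ≫ X ◁ dup X ≫ (α_ X X X).inv ≫ (β_ X X).hom ▷ X ≫
        (α_ X X X).hom) ≫ (α_ X X (X ⊗ X)).inv := by simp [tensorμ]
    _ = _ := by rw [dup_comp_whiskerLeft_dup_comp_braiding]; simp

theorem isMap_of_isIso {X Y : C} (f : X ⟶ Y) [IsIso f] : IsMap f := by
  constructor
  · calc dup X ≫ (f ⊗ₘ f) = f ≫ (inv f ≫ dup X) ≫ (f ⊗ₘ f) := by simp
      _ ≤ f ≫ (dup Y ≫ (inv f ⊗ₘ inv f)) ≫ (f ⊗ₘ f) :=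
        comp_mono le_rfl (comp_mono (lax_dup (inv f)) le_rfl)
      _ = f ≫ dup Y := by simp [tensorHom_comp_tensorHom]
  · calc del X = f ≫ inv f ≫ del X := by simp
      _ ≤ f ≫ del Y := comp_mono le_rfl (lax_del (inv f))

theorem IsMap.comp {X Y Z : C} {f : X ⟶ Y} {g : Y ⟶ Z} (hf : IsMap f) (hg : IsMap g) :
    IsMap (f ≫ g) := by
  constructor
  · calc dup X ≫ ((f ≫ g) ⊗ₘ (f ≫ g)) = (dup X ≫ (f ⊗ₘ f)) ≫ (g ⊗ₘ g) := by
          simp [tensorHom_comp_tensorHom]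
      _ ≤ (f ≫ dup Y) ≫ (g ⊗ₘ g) := comp_mono hf.1 le_rfl
      _ = f ≫ dup Y ≫ (g ⊗ₘ g) := Category.assoc _ _ _
      _ ≤ f ≫ g ≫ dup Z := comp_mono le_rfl hg.1
      _ = (f ≫ g) ≫ dup Z := (Category.assoc _ _ _).symm
  · calc del X ≤ f ≫ del Y := hf.2
      _ ≤ f ≫ g ≫ del Z := comp_mono le_rfl hg.2
      _ = (f ≫ g) ≫ del Z := (Category.assoc _ _ _).symm

theorem IsMap.tensor {X X' Y Y' : C} {f : X ⟶ Y} {g : X' ⟶ Y'} (hf : IsMap f)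
    (hg : IsMap g) : IsMap (f ⊗ₘ g) := by
  constructor
  · calc dup (X ⊗ X') ≫ ((f ⊗ₘ g) ⊗ₘ (f ⊗ₘ g))
        = ((dup X ≫ (f ⊗ₘ f)) ⊗ₘ (dup X' ≫ (g ⊗ₘ g))) ≫ tensorμ Y Y Y' Y' := by
          rw [dup_tensor, Category.assoc, ← tensorμ_natural, tensorHom_comp_tensorHom_assoc]
      _ ≤ ((f ≫ dup Y) ⊗ₘ (g ≫ dup Y')) ≫ tensorμ Y Y Y' Y' :=
          comp_mono (tensor_mono hf.1 hg.1) le_rfl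
      _ = (f ⊗ₘ g) ≫ dup (Y ⊗ Y') := by
          rw [dup_tensor, tensorHom_comp_tensorHom_assoc]
  · calc del (X ⊗ X') = (del X ⊗ₘ del X') ≫ (λ_ (𝟙_ C)).hom := del_tensor X X'
      _ ≤ ((f ≫ del Y) ⊗ₘ (g ≫ del Y')) ≫ (λ_ (𝟙_ C)).hom :=
          comp_mono (tensor_mono hf.2 hg.2) le_rfl
      _ = (f ⊗ₘ g) ≫ del (Y ⊗ Y') := by
          rw [del_tensor, tensorHom_comp_tensorHom_assoc]

theorem isMap_del (X : C) : IsMap (del X) := by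
  constructor
  · rw [SingleValued, dup_comp_del_tensor_del, dup_unitObj]
  · rw [Total, del_unitObj, Category.comp_id]

theorem isMap_dup (X : C) : IsMap (dup X) := by
  constructor
  · rw [SingleValued, dup_tensor, ← dup_comp_dup_tensor_dup_comp_tensorμ]
  · rw [Total, del_tensor, reassoc_of% dup_comp_del_tensor_del, Iso.inv_hom_id,
      Category.comp_id]

def fst (M N : C) : M ⊗ N ⟶ M := (𝟙 M ⊗ₘ del N) ≫ (ρ_ M).hom

def snd (M N : C) : M ⊗ N ⟶ N := (del M ⊗ₘ 𝟙 N) ≫ (λ_ N).hom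

theorem isMap_fst (M N : C) : IsMap (fst M N) :=
  ((isMap_of_isIso (𝟙 M)).tensor (isMap_del N)).comp (isMap_of_isIso _)

theorem isMap_snd (M N : C) : IsMap (snd M N) :=
  ((isMap_del M).tensor (isMap_of_isIso (𝟙 N))).comp (isMap_of_isIso _)

theorem dup_comp_tensorHom_comp_fst {K M N : C} (f : K ⟶ M) {g : K ⟶ N} (hg : Total g) :
    (dup K ≫ (f ⊗ₘ g)) ≫ fst M N = f := by
  rw [fst, Category.assoc, tensorHom_comp_tensorHom_assoc, Category.comp_id, hg.comp_del,
    tensorHom_def', Category.assoc, rightUnitor_naturality,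
    reassoc_of% dup_del_right, Iso.inv_hom_id_assoc]

theorem dup_comp_tensorHom_comp_snd {K M N : C} {f : K ⟶ M} (g : K ⟶ N) (hf : Total f) :
    (dup K ≫ (f ⊗ₘ g)) ≫ snd M N = g := by
  rw [snd, Category.assoc, tensorHom_comp_tensorHom_assoc, Category.comp_id, hf.comp_del,
    MonoidalCategory.tensorHom_def, Category.assoc, leftUnitor_naturality,
    reassoc_of% dup_del_left, Iso.inv_hom_id_assoc]

theorem dup_comp_fst_tensor_snd (M N : C) : dup (M ⊗ N) ≫ (fst M N ⊗ₘ snd M N) = 𝟙 (M ⊗ N) := by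
  have unit_braiding : (β_ (𝟙_ C) (𝟙_ C)).hom = (λ_ (𝟙_ C)).hom ≫ (ρ_ (𝟙_ C)).inv := by
    rw [← braiding_rightUnitor (𝟙_ C)]; simp
  calc dup (M ⊗ N) ≫ (fst M N ⊗ₘ snd M N)
      = ((dup M ≫ M ◁ del M) ⊗ₘ (dup N ≫ del N ▷ N)) ≫ tensorμ M (𝟙_ C) (𝟙_ C) N ≫
          ((ρ_ M).hom ⊗ₘ (λ_ N).hom) := by
        rw [dup_tensor, fst, snd, ← tensorHom_comp_tensorHom, Category.assoc,
          ← tensorμ_natural_assoc, tensorHom_comp_tensorHom_assoc, id_tensorHom, tensorHom_id]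
    _ = 𝟙 (M ⊗ N) := by
        rw [dup_del_right, dup_del_left, tensorμ, unit_braiding]
        monoidal

theorem dup_comp_comp_fst_tensor_comp_snd {K M N : C} {h : K ⟶ M ⊗ N} (hh : SingleValued h) :
    dup K ≫ ((h ≫ fst M N) ⊗ₘ (h ≫ snd M N)) = h := by
  rw [← tensorHom_comp_tensorHom, ← Category.assoc, ← hh.comp_dup, Category.assoc,
    dup_comp_fst_tensor_snd, Category.comp_id]

end CartesianBicatRel

open CartesianBicatRel in
/-- Maps form a cartesian category: identities and composites of maps are maps, the
projections are maps, and for maps `f, g` the pairing `Δ;(f⊗g)` is the unique map whose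
composites with the projections are `f` and `g`; hence `M ⊗ N` is a categorical product
of `M` and `N` in the subcategory of maps. -/
theorem maps_cartesian {C : Type u} [Category.{v} C] [MonoidalCategory C]
    [SymmetricCategory C] [∀ X Y : C, PartialOrder (X ⟶ Y)] [CartesianBicatRel C]
    (M N : C) :
    (∀ X : C, IsMap (𝟙 X)) ∧
    (∀ {X Y Z : C} (f : X ⟶ Y) (g : Y ⟶ Z), IsMap f → IsMap g → IsMap (f ≫ g)) ∧
    IsMap ((𝟙 M ⊗ₘ del N) ≫ (ρ_ M).hom) ∧
    IsMap ((del M ⊗ₘ 𝟙 N) ≫ (λ_ N).hom) ∧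
    (∀ {K : C} (f : K ⟶ M) (g : K ⟶ N), IsMap f → IsMap g →
      IsMap (dup K ≫ (f ⊗ₘ g)) ∧
      (dup K ≫ (f ⊗ₘ g)) ≫ ((𝟙 M ⊗ₘ del N) ≫ (ρ_ M).hom) = f ∧
      (dup K ≫ (f ⊗ₘ g)) ≫ ((del M ⊗ₘ 𝟙 N) ≫ (λ_ N).hom) = g ∧
      (∀ h' : K ⟶ M ⊗ N, IsMap h' →
        h' ≫ ((𝟙 M ⊗ₘ del N) ≫ (ρ_ M).hom) = f →
        h' ≫ ((del M ⊗ₘ 𝟙 N) ≫ (λ_ N).hom) = g →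
        h' = dup K ≫ (f ⊗ₘ g))) := by
  refine ⟨fun X => isMap_of_isIso (𝟙 X), fun f g hf hg => hf.comp hg, isMap_fst M N,
    isMap_snd M N, fun f g hf hg => ⟨(isMap_dup _).comp (hf.tensor hg),
    dup_comp_tensorHom_comp_fst f hg.2, dup_comp_tensorHom_comp_snd g hf.2, ?_⟩⟩
  intro h hh hfst hsnd
  rw [← hfst, ← hsnd]
  exact (dup_comp_comp_fst_tensor_comp_snd hh.1).symm
end
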